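/- Let p ∈ (0,1/2) and ω ∈ (0,1). Suppose that for every n in an infinite set of lengths there are codewords x_i, x_j ∈ 𝔽₂ⁿ with d(x_i,x_j) = w(n), where w(n) is even, w(n)/2 + p(n−w(n)) is an integer, and w(n)/n → ω. Then lim_{n→∞} (1/n) log₂ P_{x_i}(X_ij) = A(ω) = ω log₂(2√(p(1−p))). -/
import Mathlib


open Real Filter

/-- BSC output distribution: `P_x(Y) = Σ_{y∈Y} p^{d(x,y)}(1−p)^{n−d(x,y)}`. -/
noncomputable def Px {n : ℕ} (p : ℝ) (x : Fin n → ZMod 2) (Y : Finset (Fin n → ZMod 2)) : ℝ :=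
  ∑ y ∈ Y, p ^ hammingDist x y * (1 - p) ^ (n - hammingDist x y)

/-- `A(ω) = ω log₂(2√(p(1−p)))`. -/
noncomputable def Afun (p ω : ℝ) : ℝ := ω * logb 2 (2 * Real.sqrt (p * (1 - p)))


lemma binom_term_le_one {q : ℝ} (hq0 : 0 ≤ q) (hq1 : q ≤ 1) (m k : ℕ) (hk : k ∈ Finset.range (m+1)) :
    (m.choose k : ℝ) * q ^ k * (1 - q) ^ (m - k) ≤ 1 := by
  have hsum : (∑ j ∈ Finset.range (m+1), q ^ j * (1-q) ^ (m-j) * (m.choose j : ℝ)) = 1 := by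
    rw [← add_pow]; norm_num
  calc (m.choose k : ℝ) * q ^ k * (1 - q) ^ (m - k)
      = q ^ k * (1-q) ^ (m-k) * (m.choose k : ℝ) := by ring
    _ ≤ ∑ j ∈ Finset.range (m+1), q ^ j * (1-q) ^ (m-j) * (m.choose j : ℝ) := by
        apply Finset.single_le_sum (f := fun j => q ^ j * (1-q) ^ (m-j) * (m.choose j : ℝ)) _ hk
        intro i _
        have : (0:ℝ) ≤ 1 - q := by linarith
        positivity
    _ = 1 := hsum

lemma one_le_succ_mul_binom_term {q : ℝ} (hq0 : 0 < q) (hq1 : q < 1) (m k : ℕ)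
    (hk : (k:ℝ) = q * m) :
    1 ≤ ((m:ℝ) + 1) * ((m.choose k : ℝ) * q ^ k * (1 - q) ^ (m - k)) := by
  set T : ℕ → ℝ := fun j => (m.choose j : ℝ) * q ^ j * (1 - q) ^ (m - j) with hT
  have hq1' : (0:ℝ) < 1 - q := by linarith
  have hkm : k ≤ m := by
    have : (k:ℝ) ≤ (m:ℝ) := by nlinarith [Nat.cast_nonneg (α := ℝ) m]
    exact_mod_cast this
  have Tpos : ∀ j, j ≤ m → 0 < T j := by
    intro j hj
    have : 0 < m.choose j := Nat.choose_pos hj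
    have : (0:ℝ) < m.choose j := by exact_mod_cast this
    positivity
  have key : ∀ j, j < m → ((j:ℝ)+1) * (1-q) * T (j+1) = ((m:ℝ)-j) * q * T j := by
    intro j hj
    have h0 := Nat.choose_succ_right_eq m j
    have h1 : (m.choose (j+1) : ℝ) * ((j:ℝ)+1) = (m.choose j : ℝ) * ((m:ℝ) - (j:ℝ)) := by
      have := congrArg (Nat.cast (R := ℝ)) h0
      push_cast [Nat.cast_sub hj.le] at this
      linarith [this]
    have h2 : m - j = (m - (j+1)) + 1 := by omega
    simp only [hT]
    rw [h2, pow_succ, pow_succ]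
    linear_combination (q ^ j * q * (1 - q) ^ (m - (j+1)) * (1 - q)) * h1
  have up : ∀ j, j < k → T j ≤ T (j+1) := by
    intro j hj
    have hjm : j < m := lt_of_lt_of_le hj hkm
    have hjr : (j:ℝ) + 1 ≤ q * m := by
      have : (j:ℝ) + 1 ≤ (k:ℝ) := by exact_mod_cast hj
      linarith [hk]
    have hineq : ((j:ℝ)+1) * (1-q) ≤ ((m:ℝ)-j) * q := by nlinarith
    have hpos1 : 0 < ((m:ℝ)-j) * q := by
      have : (j:ℝ) < m := by exact_mod_cast hjm
      nlinarith
    have h := key j hjm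
    have hT1 : 0 < T (j+1) := Tpos _ (by omega)
    nlinarith
  have down : ∀ j, k ≤ j → j < m → T (j+1) ≤ T j := by
    intro j hjk hjm
    have hjr : q * m ≤ (j:ℝ) := by
      have : (k:ℝ) ≤ (j:ℝ) := by exact_mod_cast hjk
      linarith [hk]
    have hineq : ((m:ℝ)-j) * q ≤ ((j:ℝ)+1) * (1-q) := by
      have : (m:ℝ) * q ≤ j + (1-q) := by nlinarith
      have hj0 : (0:ℝ) ≤ (j:ℝ) := Nat.cast_nonneg j
      nlinarith
    have h := key j hjm
    have hT0 : 0 < T j := Tpos _ hjm.le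
    have hpos1 : 0 < ((j:ℝ)+1) * (1-q) := by positivity
    nlinarith
  have A1 : ∀ d, T (k - d) ≤ T k := by
    intro d
    induction d with
    | zero => simp
    | succ d ih =>
      by_cases h : k - (d+1) = k - d
      · rw [h]; exact ih
      · have h1 : k - (d+1) < k := by omega
        have h2 : k - (d+1) + 1 = k - d := by omega
        calc T (k - (d+1)) ≤ T (k - (d+1) + 1) := up _ h1
          _ = T (k - d) := by rw [h2]
          _ ≤ T k := ih
  have A2 : ∀ d, k + d ≤ m → T (k + d) ≤ T k := by
    intro d
    induction d with
    | zero => simp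
    | succ d ih =>
      intro hdm
      calc T (k + (d+1)) = T ((k+d) + 1) := by ring_nf
        _ ≤ T (k + d) := down _ (by omega) (by omega)
        _ ≤ T k := ih (by omega)
  have maxT : ∀ j, j ≤ m → T j ≤ T k := by
    intro j hj
    rcases le_or_gt j k with h | h
    · have : j = k - (k - j) := by omega
      rw [this]; exact A1 _
    · have : j = k + (j - k) := by omega
      rw [this]; exact A2 _ (by omega)
  have hsum : (∑ j ∈ Finset.range (m+1), q ^ j * (1-q) ^ (m-j) * (m.choose j : ℝ)) = 1 := by
    rw [← add_pow]; norm_num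
  calc (1:ℝ) = ∑ j ∈ Finset.range (m+1), q ^ j * (1-q) ^ (m-j) * (m.choose j : ℝ) := hsum.symm
    _ ≤ ∑ _j ∈ Finset.range (m+1), T k := by
        apply Finset.sum_le_sum
        intro i hi
        have : q ^ i * (1-q) ^ (m-i) * (m.choose i : ℝ) = T i := by simp only [hT]; ring
        rw [this]
        exact maxT i (by simpa using Nat.lt_succ_iff.mp (Finset.mem_range.mp hi))
    _ = ((m:ℝ)+1) * T k := by
        rw [Finset.sum_const, Finset.card_range]
        push_cast; ring


lemma zmod2_key (a b c : ZMod 2) :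
    (b ≠ c ↔ ((a ≠ b ∧ ¬(a ≠ c)) ∨ (¬(a ≠ b) ∧ a ≠ c))) := by revert a b c; decide

lemma zmod2_ne_iff (a b : ZMod 2) : a ≠ b ↔ a + 1 = b := by revert a b; decide

lemma zmod2_add_one_ne (a : ZMod 2) : a + 1 ≠ a := by revert a; decide

section counting
variable {N : ℕ} (x y : Fin N → ZMod 2)

lemma hamming_split (z : Fin N → ZMod 2) :
    hammingDist x z =
      ((Finset.univ.filter fun i => x i ≠ y i).filter fun i => x i ≠ z i).card +
      (((Finset.univ.filter fun i => x i ≠ y i)ᶜ).filter fun i => x i ≠ z i).card := by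
  classical
  rw [← Finset.card_union_of_disjoint (Finset.disjoint_filter_filter disjoint_compl_right)]
  show (Finset.univ.filter fun i => x i ≠ z i).card = _
  congr 1
  ext i
  simp only [Finset.mem_filter, Finset.mem_univ, true_and, Finset.mem_union, Finset.mem_compl]
  tauto

lemma hamming_split_y (z : Fin N → ZMod 2) :
    hammingDist y z =
      ((Finset.univ.filter fun i => x i ≠ y i).filter fun i => ¬(x i ≠ z i)).card +
      (((Finset.univ.filter fun i => x i ≠ y i)ᶜ).filter fun i => x i ≠ z i).card := by
  classical
  rw [← Finset.card_union_of_disjoint (Finset.disjoint_filter_filter disjoint_compl_right)]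
  show (Finset.univ.filter fun i => y i ≠ z i).card = _
  congr 1
  ext i
  simp only [Finset.mem_filter, Finset.mem_univ, true_and, Finset.mem_union, Finset.mem_compl]
  exact zmod2_key (x i) (y i) (z i)

lemma card_X (W K t2 : ℕ)
    (hd : hammingDist x y = W) (hW2 : W / 2 * 2 = W) (ht : t2 = W / 2 + K) :
    (Finset.univ.filter fun z => hammingDist x z = t2 ∧ hammingDist y z = t2).card
      = W.choose (W / 2) * (N - W).choose K := by
  classical
  set D : Finset (Fin N) := Finset.univ.filter fun i => x i ≠ y i with hD
  have hDcard : D.card = W := hd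
  have hDc : Dᶜ.card = N - W := by
    rw [Finset.card_compl, hDcard, Fintype.card_fin]
  -- key facts about the inverse map
  have inv_facts : ∀ P : Finset (Fin N) × Finset (Fin N), P.1 ⊆ D → P.2 ⊆ Dᶜ →
      (D.filter (fun i => x i ≠ (fun i => if i ∈ P.1 ∪ P.2 then x i + 1 else x i) i) = P.1) ∧
      (Dᶜ.filter (fun i => x i ≠ (fun i => if i ∈ P.1 ∪ P.2 then x i + 1 else x i) i) = P.2) := by
    intro P hU hV
    have hne : ∀ i, (x i ≠ (if i ∈ P.1 ∪ P.2 then x i + 1 else x i)) ↔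
        (i ∈ P.1 ∨ i ∈ P.2) := by
      intro i
      rw [← Finset.mem_union]
      split_ifs with h
      · simpa [h] using fun hc => zmod2_add_one_ne (x i) hc.symm
      · simp [h]
    constructor
    · ext i
      have h1 : i ∈ P.1 → i ∈ D := fun h => hU h
      have h2 : i ∈ P.2 → i ∉ D := fun h => Finset.mem_compl.mp (hV h)
      simp only [Finset.mem_filter, hne]
      tauto
    · ext i
      have h1 : i ∈ P.1 → i ∈ D := fun h => hU h
      have h2 : i ∈ P.2 → i ∉ D := fun h => Finset.mem_compl.mp (hV h)
      simp only [Finset.mem_filter, hne, Finset.mem_compl]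
      tauto
  rw [show (Finset.univ.filter fun z => hammingDist x z = t2 ∧ hammingDist y z = t2).card
      = ((D.powersetCard (W/2)) ×ˢ (Dᶜ.powersetCard K)).card from ?_,
    Finset.card_product, Finset.card_powersetCard, Finset.card_powersetCard, hDcard, hDc]
  apply Finset.card_bij'
    (i := fun z _ => (D.filter fun i => x i ≠ z i, Dᶜ.filter fun i => x i ≠ z i))
    (j := fun P _ => fun i => if i ∈ P.1 ∪ P.2 then x i + 1 else x i)
  · -- hi
    intro z hz
    simp only [Finset.mem_filter, Finset.mem_univ, true_and] at hz
    obtain ⟨h1, h2⟩ := hz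
    have e1 := hamming_split x y z
    have e2 := hamming_split_y x y z
    rw [← hD] at e1 e2
    rw [h1] at e1; rw [h2] at e2
    have hsplit := Finset.card_filter_add_card_filter_not
      (s := D) (p := fun i => x i ≠ z i)
    rw [hDcard] at hsplit
    rw [Finset.mem_product, Finset.mem_powersetCard, Finset.mem_powersetCard]
    refine ⟨⟨Finset.filter_subset _ _, ?_⟩, ⟨Finset.filter_subset _ _, ?_⟩⟩ <;>
      dsimp only <;> omega
  · -- hj
    intro P hP
    rw [Finset.mem_product, Finset.mem_powersetCard, Finset.mem_powersetCard] at hP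
    obtain ⟨⟨hU, hUc⟩, hV, hVc⟩ := hP
    obtain ⟨hfD, hfDc⟩ := inv_facts P hU hV
    set z : Fin N → ZMod 2 := fun i => if i ∈ P.1 ∪ P.2 then x i + 1 else x i with hz
    have e1 := hamming_split x y z
    have e2 := hamming_split_y x y z
    rw [← hD] at e1 e2
    rw [hfD] at e1
    rw [hfDc] at e1 e2
    have hsplit := Finset.card_filter_add_card_filter_not
      (s := D) (p := fun i => x i ≠ z i)
    rw [hDcard, hfD] at hsplit
    simp only [Finset.mem_filter, Finset.mem_univ, true_and]
    constructor <;> omega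
  · -- left inverse
    intro z hz
    funext i
    by_cases h : x i ≠ z i
    · have hmem : i ∈ D.filter (fun i => x i ≠ z i) ∪ Dᶜ.filter (fun i => x i ≠ z i) := by
        simp only [Finset.mem_union, Finset.mem_filter, Finset.mem_compl]
        by_cases hiD : i ∈ D
        · left; exact ⟨hiD, h⟩
        · right; exact ⟨hiD, h⟩
      simp only [hmem, if_pos]
      exact (zmod2_ne_iff _ _).mp h
    · have hmem : i ∉ D.filter (fun i => x i ≠ z i) ∪ Dᶜ.filter (fun i => x i ≠ z i) := by
        simp only [Finset.mem_union, Finset.mem_filter, Finset.mem_compl]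
        push_neg at h ⊢
        exact ⟨fun _ => h, fun _ => h⟩
      simp only [hmem, if_neg, not_false_iff]
      push_neg at h; exact h
  · -- right inverse
    intro P hP
    rw [Finset.mem_product, Finset.mem_powersetCard, Finset.mem_powersetCard] at hP
    obtain ⟨⟨hU, hUc⟩, hV, hVc⟩ := hP
    obtain ⟨hfD, hfDc⟩ := inv_facts P hU hV
    exact Prod.ext hfD hfDc

end counting

lemma per_t (p : ℝ) (hp : 0 < p) (hp' : p < 1/2) (N W T2 : ℕ) (hN : 0 < N)
    (x y : Fin N → ZMod 2) (hd : hammingDist x y = W) (hW2 : W / 2 * 2 = W)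
    (hT2 : (T2:ℝ) = (W:ℝ)/2 + p * ((N:ℝ) - (W:ℝ))) :
    |(N:ℝ)⁻¹ * logb 2 (Px p x
        (Finset.univ.filter fun z => hammingDist x z = T2 ∧ hammingDist y z = T2))
      - ((W:ℝ)/(N:ℝ)) * (1 + logb 2 (p*(1-p))/2)| ≤ 2 * (logb 2 ((N:ℝ)+1) / (N:ℝ)) := by
  have hp1 : (0:ℝ) < 1 - p := by linarith
  have hWN : W ≤ N := by
    have h := hammingDist_le_card_fintype (x := x) (y := y)
    rwa [hd, Fintype.card_fin] at h
  have hWNr : (W:ℝ) ≤ (N:ℝ) := by exact_mod_cast hWN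
  set M := N - W with hM
  have hMr : (M:ℝ) = (N:ℝ) - (W:ℝ) := by
    rw [hM, Nat.cast_sub hWN]
  have hhalf : ((W/2 : ℕ):ℝ) = (W:ℝ)/2 := by
    have := congrArg (Nat.cast (R := ℝ)) hW2
    push_cast at this
    linarith
  have hW2T : W/2 ≤ T2 := by
    have hr : ((W/2:ℕ):ℝ) ≤ (T2:ℝ) := by
      rw [hhalf, hT2]
      nlinarith
    exact_mod_cast hr
  set K := T2 - W/2 with hK
  have hKr : (K:ℝ) = p * (M:ℝ) := by
    rw [hK, Nat.cast_sub hW2T, hhalf, hT2, hMr]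
    ring
  have hKM : K ≤ M := by
    have hr : (K:ℝ) ≤ (M:ℝ) := by
      rw [hKr]
      nlinarith [Nat.cast_nonneg (α := ℝ) M]
    exact_mod_cast hr
  have ht2 : T2 = W/2 + K := by omega
  have hNT2 : N - T2 = (M - K) + W/2 := by omega
  have hcard := card_X x y W K T2 hd hW2 ht2
  set S := (Finset.univ.filter fun z => hammingDist x z = T2 ∧ hammingDist y z = T2) with hS
  have hPx : Px p x S = ((W.choose (W/2) * M.choose K : ℕ) : ℝ)
      * (p ^ T2 * (1-p) ^ (N - T2)) := by
    unfold Px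
    have hterm : ∀ z ∈ S, p ^ hammingDist x z * (1-p) ^ (N - hammingDist x z)
        = p ^ T2 * (1-p) ^ (N - T2) := by
      intro z hz
      rw [(Finset.mem_filter.mp hz).2.1]
    rw [Finset.sum_congr rfl hterm, Finset.sum_const, hcard, nsmul_eq_mul]
  set B1 : ℝ := (W.choose (W/2) : ℝ) * (1/2:ℝ) ^ (W/2) * (1 - 1/2:ℝ) ^ (W - W/2) with hB1
  set B2 : ℝ := (M.choose K : ℝ) * p ^ K * (1 - p) ^ (M - K) with hB2
  have hB1pos : 0 < B1 := by
    have h : 0 < W.choose (W/2) := Nat.choose_pos (by omega)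
    have h' : (0:ℝ) < W.choose (W/2) := by exact_mod_cast h
    rw [hB1]; positivity
  have hB2pos : 0 < B2 := by
    have h : 0 < M.choose K := Nat.choose_pos hKM
    have h' : (0:ℝ) < M.choose K := by exact_mod_cast h
    rw [hB2]; positivity
  have hB1le : B1 ≤ 1 :=
    binom_term_le_one (by norm_num) (by norm_num) W (W/2) (Finset.mem_range.mpr (by omega))
  have hB2le : B2 ≤ 1 :=
    binom_term_le_one hp.le (by linarith) M K (Finset.mem_range.mpr (by omega))
  have hB1ge : 1 ≤ ((W:ℝ) + 1) * B1 :=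
    one_le_succ_mul_binom_term (by norm_num) (by norm_num) W (W/2) (by rw [hhalf]; ring)
  have hB2ge : 1 ≤ ((M:ℝ) + 1) * B2 :=
    one_le_succ_mul_binom_term hp (by linarith) M K hKr
  have e3 : (1/2:ℝ) ^ (W/2) * (1 - 1/2:ℝ) ^ (W - W/2) * 2 ^ W = 1 := by
    have h12 : (1 - 1/2:ℝ) = 1/2 := by norm_num
    rw [h12, ← pow_add, show W/2 + (W - W/2) = W from by omega, ← mul_pow]
    norm_num
  have hPx2 : Px p x S = B1 * B2 * 2 ^ W * (p * (1-p)) ^ (W/2) := by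
    rw [hPx, hNT2, ht2]
    push_cast
    rw [pow_add, pow_add, mul_pow, hB1, hB2]
    linear_combination (-((W.choose (W/2) : ℝ) * (M.choose K : ℝ) * p ^ (W/2) * p ^ K
      * (1-p) ^ (M-K) * (1-p) ^ (W/2))) * e3
  clear_value B1 B2
  set L : ℝ := logb 2 (p * (1-p)) with hL
  have hlogPx : logb 2 (Px p x S) = logb 2 B1 + logb 2 B2 + (W:ℝ) + ((W:ℝ)/2) * L := by
    rw [hPx2]
    rw [Real.logb_mul (by positivity) (by positivity),
        Real.logb_mul (by positivity) (by positivity),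
        Real.logb_mul (ne_of_gt hB1pos) (ne_of_gt hB2pos),
        Real.logb_pow, Real.logb_pow, Real.logb_self_eq_one (by norm_num : (1:ℝ) < 2), hhalf]
    ring
  have hNr : (0:ℝ) < (N:ℝ) := by exact_mod_cast hN
  have hlogN : 0 ≤ logb 2 ((N:ℝ)+1) :=
    Real.logb_nonneg (by norm_num) (by linarith [Nat.cast_nonneg (α := ℝ) N])
  have hB1u : logb 2 B1 ≤ 0 := Real.logb_nonpos (by norm_num) hB1pos.le hB1le
  have hB2u : logb 2 B2 ≤ 0 := Real.logb_nonpos (by norm_num) hB2pos.le hB2le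
  have hB1l : -(logb 2 ((N:ℝ)+1)) ≤ logb 2 B1 := by
    have h1 : ((N:ℝ)+1)⁻¹ ≤ B1 := by
      rw [inv_eq_one_div, div_le_iff₀ (by positivity : (0:ℝ) < (N:ℝ)+1)]
      have hWr : (W:ℝ) + 1 ≤ (N:ℝ) + 1 := by linarith
      calc (1:ℝ) ≤ ((W:ℝ)+1) * B1 := hB1ge
        _ ≤ ((N:ℝ)+1) * B1 := mul_le_mul_of_nonneg_right hWr hB1pos.le
        _ = B1 * ((N:ℝ)+1) := mul_comm _ _
    have h2 := Real.logb_le_logb_of_le (by norm_num : (1:ℝ) < 2) (by positivity) h1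
    rwa [Real.logb_inv] at h2
  have hB2l : -(logb 2 ((N:ℝ)+1)) ≤ logb 2 B2 := by
    have hMN : (M:ℝ) ≤ (N:ℝ) := by rw [hMr]; linarith [Nat.cast_nonneg (α := ℝ) W]
    have h1 : ((N:ℝ)+1)⁻¹ ≤ B2 := by
      rw [inv_eq_one_div, div_le_iff₀ (by positivity : (0:ℝ) < (N:ℝ)+1)]
      have hMr2 : (M:ℝ) + 1 ≤ (N:ℝ) + 1 := by linarith
      calc (1:ℝ) ≤ ((M:ℝ)+1) * B2 := hB2ge
        _ ≤ ((N:ℝ)+1) * B2 := mul_le_mul_of_nonneg_right hMr2 hB2pos.le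
        _ = B2 * ((N:ℝ)+1) := mul_comm _ _
    have h2 := Real.logb_le_logb_of_le (by norm_num : (1:ℝ) < 2) (by positivity) h1
    rwa [Real.logb_inv] at h2
  have key : (N:ℝ)⁻¹ * logb 2 (Px p x S) - ((W:ℝ)/(N:ℝ)) * (1 + L/2)
      = (N:ℝ)⁻¹ * (logb 2 B1 + logb 2 B2) := by
    rw [hlogPx]; field_simp; ring
  rw [key, abs_le]
  constructor
  · have h := mul_le_mul_of_nonneg_left
      (show -(2 * logb 2 ((N:ℝ)+1)) ≤ logb 2 B1 + logb 2 B2 from by linarith)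
      (inv_nonneg.mpr hNr.le)
    have heq : (N:ℝ)⁻¹ * (-(2 * logb 2 ((N:ℝ)+1))) = -(2 * (logb 2 ((N:ℝ)+1) / (N:ℝ))) := by
      field_simp
    linarith [heq ▸ h]
  · have h : (N:ℝ)⁻¹ * (logb 2 B1 + logb 2 B2) ≤ 0 :=
      mul_nonpos_of_nonneg_of_nonpos (inv_nonneg.mpr hNr.le) (by linarith)
    have h2 : 0 ≤ 2 * (logb 2 ((N:ℝ)+1) / (N:ℝ)) := by positivity
    linarith

lemma logb_succ_div_tendsto : Tendsto (fun X : ℝ => logb 2 (X + 1) / X) atTop (nhds 0) := by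
  have h2 : (fun X : ℝ => Real.log (X + 1)) =o[atTop] (fun X : ℝ => X + 1) :=
    Real.isLittleO_log_id_atTop.comp_tendsto
      (tendsto_atTop_add_const_right atTop (1:ℝ) tendsto_id)
  have h3 : (fun X : ℝ => X + 1) =O[atTop] (fun X : ℝ => X) := by
    rw [Asymptotics.isBigO_iff]
    refine ⟨2, ?_⟩
    filter_upwards [eventually_ge_atTop (1:ℝ)] with X hX
    rw [Real.norm_eq_abs, Real.norm_eq_abs, abs_of_nonneg (by linarith), abs_of_nonneg (by linarith)]
    linarith
  have h4 := (h2.trans_isBigO h3).tendsto_div_nhds_zero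
  have heq : (fun X : ℝ => logb 2 (X + 1) / X)
      = fun X => (Real.log (X + 1) / X) * (Real.log 2)⁻¹ := by
    funext X
    rw [Real.logb]
    ring
  rw [heq]
  simpa using h4.mul_const (Real.log 2)⁻¹


/-- Let `p ∈ (0,1/2)` and `ω ∈ (0,1)`. Suppose that for every `n` in an infinite
(strictly increasing) set of lengths `n t` there are codewords `x t, y t ∈ 𝔽₂^{n t}` with
`d(x t, y t) = w t`, where `w t` is even, `w t/2 + p(n t − w t)` is an integer `tt t`, and
`w t/(n t) → ω`. Then, with `X_ij = {z : d(x,z) = d(y,z) = tt}`,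
`lim (1/n) log₂ P_{x}(X_ij) = A(ω) = ω log₂(2√(p(1−p)))`. -/
theorem pairwise_error_exponent (p ω : ℝ) (hp : 0 < p) (hp' : p < 1/2)
    (hω : 0 < ω) (hω' : ω < 1)
    (n w tt : ℕ → ℕ) (hn : StrictMono n)
    (x y : ∀ t : ℕ, Fin (n t) → ZMod 2)
    (hd : ∀ t, hammingDist (x t) (y t) = w t)
    (heven : ∀ t, Even (w t))
    (hint : ∀ t, (tt t : ℝ) = (w t : ℝ) / 2 + p * ((n t : ℝ) - (w t : ℝ)))
    (hlim : Tendsto (fun t => (w t : ℝ) / (n t : ℝ)) atTop (nhds ω)) :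
    Tendsto (fun t => ((n t : ℝ))⁻¹ * logb 2 (Px p (x t)
        (Finset.univ.filter fun z =>
          hammingDist (x t) z = tt t ∧ hammingDist (y t) z = tt t)))
      atTop (nhds (Afun p ω)) := by
  have hq : (0:ℝ) < p * (1 - p) := by nlinarith
  have hAfun : Afun p ω = ω * (1 + logb 2 (p * (1 - p)) / 2) := by
    unfold Afun
    rw [Real.logb_mul two_ne_zero (ne_of_gt (Real.sqrt_pos.mpr hq)),
      Real.logb_self_eq_one (by norm_num : (1:ℝ) < 2), Real.logb, Real.logb,
      Real.log_sqrt hq.le]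
    ring
  -- limit of the main term
  have hg : Tendsto (fun t => ((w t : ℝ) / (n t : ℝ)) * (1 + logb 2 (p * (1 - p)) / 2))
      atTop (nhds (Afun p ω)) := by
    rw [hAfun]
    exact hlim.mul_const _
  -- limit of the error term
  have hnn : Tendsto (fun t => (n t : ℝ)) atTop atTop :=
    tendsto_natCast_atTop_atTop.comp hn.tendsto_atTop
  have hE : Tendsto (fun t => 2 * (logb 2 ((n t : ℝ) + 1) / (n t : ℝ))) atTop (nhds 0) := by
    have := (logb_succ_div_tendsto.comp hnn).const_mul (2:ℝ)
    simpa using this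
  -- squeeze
  set f := fun t => ((n t : ℝ))⁻¹ * logb 2 (Px p (x t)
      (Finset.univ.filter fun z =>
        hammingDist (x t) z = tt t ∧ hammingDist (y t) z = tt t)) with hf
  set g := fun t => ((w t : ℝ) / (n t : ℝ)) * (1 + logb 2 (p * (1 - p)) / 2) with hgdef
  set E := fun t => 2 * (logb 2 ((n t : ℝ) + 1) / (n t : ℝ)) with hEdef
  have hbound : ∀ᶠ t in atTop, |f t - g t| ≤ E t := by
    filter_upwards [eventually_ge_atTop 1] with t ht
    have hN : 0 < n t := lt_of_lt_of_le ht hn.le_apply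
    have hW2 : w t / 2 * 2 = w t := Nat.div_mul_cancel (heven t).two_dvd
    exact per_t p hp hp' (n t) (w t) (tt t) hN (x t) (y t) (hd t) hW2 (hint t)
  have hlow : Tendsto (fun t => g t - E t) atTop (nhds (Afun p ω)) := by
    simpa using hg.sub hE
  have hhigh : Tendsto (fun t => g t + E t) atTop (nhds (Afun p ω)) := by
    simpa using hg.add hE
  apply tendsto_of_tendsto_of_tendsto_of_le_of_le' hlow hhigh
  · filter_upwards [hbound] with t h
    have := abs_le.mp h
    linarith [this.1]
  · filter_upwards [hbound] with t h
    have := abs_le.mp h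
    linarith [this.2]
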